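/- There exists a lattice point u in the cone C(δ) such that the denominator of the rational number w(u) is exactly D(δ); that is, the denominator D(δ) in the containment w(C(δ) ∩ Z^n) ⊆ (1/D(δ))Z_{≥0} is optimal. -/

import Mathlib

open scoped Pointwise

/-- The cone `C(δ)` generated by `δ`. -/
def cone {n : ℕ} (δ : Set (Fin n → ℝ)) : Set (Fin n → ℝ) :=
  {u | ∃ c : ℝ, 0 ≤ c ∧ ∃ x ∈ δ, u = c • x}

/-!
The `ℤ`-span of the `eᵢ` in `ℚ` is cyclic, generated by some `g = ∑ zᵢ eᵢ`. Every `eᵢ` is an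
integer multiple of `g` and `g` is an integer combination of the `eᵢ`, so `den g = lcm den eᵢ = D`.
The lattice point `z` need not lie in `C(δ)`, but the points of `V` span `ℝⁿ` (their affine span is
a hyperplane missing `0`), so adding a large integer multiple of `∑ v ∈ V, v` moves `z` into the
cone while changing its weight by an integer.
-/

open Submodule Submodule.IsPrincipal

theorem Rat.zsmul_den_dvd (c : ℤ) (q : ℚ) : (c • q).den ∣ q.den := by
  simpa [zsmul_eq_mul] using Rat.mul_den_dvd c q

theorem exists_int_sum_mul_den_eq_lcm {ι : Type*} [Fintype ι] (e : ι → ℚ) :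
    ∃ z : ι → ℤ, (∑ i, e i * z i).den = Finset.univ.lcm fun i => (e i).den := by
  classical
  -- a fractional ideal of the PID `ℤ`, hence principal
  let I : Submodule ℤ ℚ := FractionalIdeal.spanFinset ℤ Finset.univ e
  obtain ⟨z, hz⟩ := (mem_span_image_finset_iff_exists_fun' ℤ).mp (generator_mem I)
  refine ⟨z, ?_⟩
  have hg : ∑ i, e i * z i = generator I := by
    rw [← hz]; exact Finset.sum_congr rfl fun i _ => by rw [zsmul_eq_mul, mul_comm]
  rw [hg]
  refine Nat.dvd_antisymm ?_ (Finset.lcm_dvd fun i _ => ?_)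
  · rw [← hz]
    exact (Finset.Rat.den_sum_dvd_lcm_den _ _).trans
      (Finset.lcm_mono_fun fun i _ => Rat.zsmul_den_dvd _ _)
  · have hei : e i ∈ I := subset_span ⟨i, Finset.mem_coe.2 (Finset.mem_univ i), rfl⟩
    obtain ⟨m, hm⟩ := (mem_iff_eq_smul_generator I).mp hei
    rw [hm]
    exact Rat.zsmul_den_dvd _ _

theorem sum_smul_mem_cone {n : ℕ} {ι : Type*} {δ : Set (Fin n → ℝ)} (hδ : Convex ℝ δ)
    {t : Finset ι} {w : ι → ℝ} {x : ι → Fin n → ℝ} (hw₀ : ∀ i ∈ t, 0 ≤ w i)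
    (hw : 0 < ∑ i ∈ t, w i) (hx : ∀ i ∈ t, x i ∈ δ) : ∑ i ∈ t, w i • x i ∈ cone δ :=
  ⟨∑ i ∈ t, w i, hw.le, t.centerMass w x, hδ.centerMass_mem hw₀ hw hx, by
    rw [Finset.centerMass, smul_smul, mul_inv_cancel₀ hw.ne', one_smul]⟩

theorem exists_nat_add_smul_sum_mem_cone {n : ℕ} {ι : Type*} {s : Finset ι} (hs : s.Nonempty)
    {x : ι → Fin n → ℝ} (hx : span ℝ (x '' s) = ⊤) (y : Fin n → ℝ) :
    ∃ M : ℕ, y + (M : ℝ) • ∑ i ∈ s, x i ∈ cone (convexHull ℝ (x '' s)) := by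
  obtain ⟨c, hc⟩ :=
    (mem_span_image_finset_iff_exists_fun' ℝ).mp (hx ▸ mem_top : y ∈ span ℝ (x '' s))
  obtain ⟨M, hM⟩ := exists_nat_gt (∑ i ∈ s, |c i|)
  have hcM : ∀ i ∈ s, 0 < c i + M := fun i hi => by
    have := Finset.single_le_sum (fun j _ => abs_nonneg (c j)) hi
    linarith [neg_abs_le (c i)]
  refine ⟨M, ?_⟩
  have hsum : y + (M : ℝ) • ∑ i ∈ s, x i = ∑ i ∈ s, (c i + M) • x i := by
    simp only [← hc, Finset.smul_sum, add_smul, Finset.sum_add_distrib]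
  rw [hsum]
  exact sum_smul_mem_cone (convex_convexHull ℝ _) (fun i hi => (hcM i hi).le)
    (Finset.sum_pos hcM hs) fun i hi => subset_convexHull ℝ _ ⟨i, hi, rfl⟩

theorem span_eq_top_of_affineSpan_eq {E : Type*} [AddCommGroup E] [Module ℝ E] {s : Set E}
    {x₀ : E} (hx₀ : x₀ ∈ s) (f : E →ₗ[ℝ] ℝ) (hs : (affineSpan ℝ s : Set E) = {x | f x = 1}) :
    span ℝ s = ⊤ := by
  refine eq_top_iff'.mpr fun y => ?_
  have hfx₀ : f x₀ = 1 := by simpa only [hs, Set.mem_ofPred_eq] using subset_affineSpan ℝ s hx₀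
  have hmem : y + (1 - f y) • x₀ ∈ span ℝ s := by
    refine affineSpan_subset_span (k := ℝ) ?_
    rw [hs, Set.mem_ofPred_eq, map_add, map_smul, hfx₀, smul_eq_mul]; ring
  simpa using sub_mem hmem (smul_mem _ (1 - f y) (subset_span hx₀))

/-- The denominator `D(δ)` in `w(C(δ) ∩ ℤⁿ) ⊆ (1/D(δ)) ℤ≥0` is optimal: there is a lattice
point `u` in the cone `C(δ)` whose weight `w(u) = ∑ eᵢ uᵢ` has denominator exactly `D(δ)`. -/
theorem exists_lattice_point_weight_den_eq {n : ℕ}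
    (e : Fin n → ℚ) (V : Finset (Fin n → ℤ)) (δ : Set (Fin n → ℝ))
    (hV : V.Nonempty)
    (hδ : δ = convexHull ℝ ((fun v => fun i => ((v i : ℤ) : ℝ)) '' (V : Set (Fin n → ℤ))))
    (hVe : ∀ v ∈ V, ∑ i, e i * (v i : ℚ) = 1)
    (hspan : (affineSpan ℝ δ : Set (Fin n → ℝ)) = {x | ∑ i, (e i : ℝ) * x i = 1})
    (D : ℕ) (hD : D = Finset.univ.lcm fun i => (e i).den) :
    ∃ u : Fin n → ℤ, (fun i => (u i : ℝ)) ∈ cone δ ∧ (∑ i, e i * (u i : ℚ)).den = D := by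
  set toReal : (Fin n → ℤ) → Fin n → ℝ := fun v i => (v i : ℝ)
  obtain ⟨z, hz⟩ := exists_int_sum_mul_den_eq_lcm e
  have hspan_top : span ℝ (toReal '' V) = ⊤ := by
    obtain ⟨v₀, hv₀⟩ := hV
    refine span_eq_top_of_affineSpan_eq ⟨v₀, hv₀, rfl⟩ (∑ i, (e i : ℝ) • LinearMap.proj i) ?_
    rw [← affineSpan_convexHull, ← hδ, hspan]
    ext x; simp [smul_eq_mul]
  obtain ⟨M, hM⟩ := exists_nat_add_smul_sum_mem_cone hV hspan_top (toReal z)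
  refine ⟨z + M • ∑ v ∈ V, v, ?_, ?_⟩
  · rw [hδ]; convert hM using 1; ext i; simp [toReal]
  · have hw : ∑ i, e i * ((z + M • ∑ v ∈ V, v) i : ℚ) = ∑ i, e i * z i + (M * V.card : ℕ) := by
      simp only [Pi.add_apply, Pi.smul_apply, Finset.sum_apply, Int.cast_add, mul_add,
        Finset.sum_add_distrib]
      congr 2
      calc ∑ i, e i * ((M • ∑ v ∈ V, v i : ℤ) : ℚ) = M * ∑ v ∈ V, ∑ i, e i * (v i : ℚ) := by
            simp only [nsmul_eq_mul, Int.cast_mul, Int.cast_natCast, Int.cast_sum, Finset.mul_sum]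
            rw [Finset.sum_comm]
            exact Finset.sum_congr rfl fun _ _ => Finset.sum_congr rfl fun _ _ => by ring
        _ = ((M * V.card : ℕ) : ℚ) := by simp [Finset.sum_congr rfl hVe]
    rw [hw, Rat.add_natCast_den, hz, hD]
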